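/- arXiv:0801.1810 — 2 statements merged into one kernel-verified Lean document; each statement's English description precedes it below -/
import Mathlib

section
/- Let k be an even integer and s ∈ ℂ. For every g = [[a, b],[c, d]] ∈ SL₂(ℝ), setting g^# := [[d, b],[c, a]] ∈ SL₂(ℝ), one has for all Z ∈ ℍ₂: Φ_{k,s}(g•(Z)) · χ_{k,s}(g•, Z) = Φ_{k,s}((g^#)_•(Z)) · χ_{k,s}((g^#)_•, Z). -/
open Matrix Complex Filter Topology

noncomputable section

abbrev M2C := Matrix (Fin 2) (Fin 2) ℂ
abbrev M2R := Matrix (Fin 2) (Fin 2) ℝ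
abbrev M2Q := Matrix (Fin 2) (Fin 2) ℚ
abbrev M4R := Matrix (Fin 2 ⊕ Fin 2) (Fin 2 ⊕ Fin 2) ℝ

/-- The standard symplectic form of degree 2. -/
def J4 : M4R := Matrix.fromBlocks 0 1 (-1) 0

/-- `g` is a real symplectic matrix of degree 2. -/
def IsSymplectic (g : M4R) : Prop := gᵀ * J4 * g = J4

/-- all entries of `g` are integers -/
def IsIntegral4 (g : M4R) : Prop := ∀ i j, ∃ n : ℤ, g i j = (n : ℝ)

/-- The Siegel modular group `Γ₂ = Sp₂(ℤ)` (as a set of real matrices). -/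
def Sp2Z : Set M4R := {g | IsSymplectic g ∧ IsIntegral4 g}

/-- `Γ_{2,0}`: elements of `Γ₂` whose lower-left 2×2 block is `0`. -/
def Gamma20 : Set M4R := {g | g ∈ Sp2Z ∧ Matrix.toBlocks₂₁ g = 0}

/-- entrywise coercion of a real 4×4 matrix to a complex one -/
def mapC (g : M4R) : Matrix (Fin 2 ⊕ Fin 2) (Fin 2 ⊕ Fin 2) ℂ := g.map (fun x => (x : ℂ))

/-- The action `g(Z) = (AZ+B)(CZ+D)⁻¹` of `Sp₂(ℝ)` on the Siegel upper half space. -/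
def smul4 (g : M4R) (Z : M2C) : M2C :=
  ((mapC g).toBlocks₁₁ * Z + (mapC g).toBlocks₁₂) * ((mapC g).toBlocks₂₁ * Z + (mapC g).toBlocks₂₂)⁻¹

/-- The factor of automorphy `j(g,Z) = det (CZ + D)`. -/
def jfac (g : M4R) (Z : M2C) : ℂ := ((mapC g).toBlocks₂₁ * Z + (mapC g).toBlocks₂₂).det

/-- entrywise imaginary part -/
def ImM (Z : M2C) : M2R := Z.map Complex.im

/-- The Siegel upper half space of degree 2. -/
def SiegelH2 : Set M2C := {Z | Z.IsSymm ∧ (ImM Z).PosDef}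

/-- `δ(Z) := det (Im Z)` -/
def Hdelta (Z : M2C) : ℝ := (ImM Z).det

/-- The summand `j(g,Z)^{-k} δ(g(Z))^s` of the Siegel Eisenstein series. -/
def eisSummand (k : ℤ) (s : ℂ) (g : M4R) (Z : M2C) : ℂ :=
  jfac g Z ^ (-k) * ((Hdelta (smul4 g Z) : ℂ)) ^ s

/-- `Γ = SL₂(ℤ)` as a set of real 2×2 matrices. -/
def SL2Zset : Set M2R := {g | g.det = 1 ∧ ∀ i j, ∃ n : ℤ, g i j = (n : ℝ)}

/-- `Γ_∞`: upper triangular elements of `SL₂(ℤ)`. -/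
def GammaInf : Set M2R := {g | g ∈ SL2Zset ∧ g 1 0 = 0}

/-- The embedding `(A,B) ↦ A × B` of pairs of 2×2 matrices into 4×4 matrices. -/
def emb (A B : M2R) : M4R :=
  Matrix.fromBlocks !![A 0 0, 0; 0, B 0 0] !![A 0 1, 0; 0, B 0 1]
                    !![A 1 0, 0; 0, B 1 0] !![A 1 1, 0; 0, B 1 1]

/-- `g• := g × 1` -/
def embUp (A : M2R) : M4R := emb A 1

/-- `g_• := 1 × g` -/
def embLow (B : M2R) : M4R := emb 1 B

/-- `χ_{k,s}(g,Z) = j(g,Z)^{-k} |j(g,Z)|^{-2s}` -/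
def chiF (k : ℤ) (s : ℂ) (g : M4R) (Z : M2C) : ℂ :=
  jfac g Z ^ (-k) * ((‖jfac g Z‖ : ℂ)) ^ (-(2 * s))

/-- `φ(Z) = τ + 2z + τ'` -/
def phiF (Z : M2C) : ℂ := Z 0 0 + 2 * Z 0 1 + Z 1 1

/-- `Φ_{k,s}(Z) = φ(Z)^{-k} |φ(Z)|^{-2s}` -/
def PhiF (k : ℤ) (s : ℂ) (Z : M2C) : ℂ :=
  phiF Z ^ (-k) * ((‖phiF Z‖ : ℂ)) ^ (-(2 * s))

/-- The Petersson slash operator `(F|_k g)(Z) = j(g,Z)^{-k} F(g(Z))`. -/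
def slashOp (k : ℤ) (g : M4R) (F : M2C → ℂ) (Z : M2C) : ℂ := jfac g Z ^ (-k) * F (smul4 g Z)

/-- The Siegel modular group as a type. -/
def Sp2ZT := {g : M4R // g ∈ Sp2Z}

/-- the left coset relation for `Γ_{2,0} \ Γ₂` -/
def rel20 (g g' : Sp2ZT) : Prop := ∃ γ ∈ Gamma20, g'.1 = γ * g.1

/-- `SL₂(ℤ)` as a type. -/
def SL2ZT := {g : M2R // g ∈ SL2Zset}

/-- the left coset relation for `Γ_∞ \ Γ` -/
def relInf (g g' : SL2ZT) : Prop := ∃ γ ∈ GammaInf, g'.1 = γ * g.1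

/-- a choice of representative of an equivalence class -/
def qout {α : Sort*} {r : α → α → Prop} (q : Quot r) : α := Classical.choose (Quot.exists_rep q)

/-- The real analytic Siegel Eisenstein series of degree 2:
`E_k^{(2)}(Z,s) = Σ_{g ∈ Γ_{2,0}\Γ₂} j(g,Z)^{-k} δ(g(Z))^s`. -/
def Eis (k : ℤ) (s : ℂ) (Z : M2C) : ℂ := ∑' q : Quot rel20, eisSummand k s (qout q).1 Z

/-- `B_k(Z,s) = δ(Z)^s Σ_{g ∈ Γ} Φ_{k,s}(g_•(Z)) χ_{k,s}(g_•,Z)` -/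
def Bk (k : ℤ) (s : ℂ) (W : M2C) : ℂ :=
  ((Hdelta W : ℂ)) ^ s * ∑' g : SL2ZT, PhiF k s (smul4 (embLow g.1) W) * chiF k s (embLow g.1) W

/-- `A_k(Z,s) = δ(Z)^s Σ_{g,h ∈ Γ_∞\Γ} χ_{k,s}(g• h_•, Z)` -/
def Ak (k : ℤ) (s : ℂ) (Z : M2C) : ℂ :=
  ((Hdelta Z : ℂ)) ^ s *
    ∑' q : Quot relInf × Quot relInf, chiF k s (embUp (qout q.1).1 * embLow (qout q.2).1) Z

/-- The normalized Hecke operator `T_p` applied via the upper embedding `•`. -/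
def TpUp (k : ℤ) (p : ℕ) (F : M2C → ℂ) (Z : M2C) : ℂ :=
  (p : ℂ) ^ ((k : ℂ) / 2 - 1) *
    (slashOp k (embUp (((p : ℝ) ^ (-(1:ℝ)/2)) • !![(p:ℝ), 0; 0, 1])) F Z +
      ∑ a : Fin p, slashOp k (embUp (((p : ℝ) ^ (-(1:ℝ)/2)) • !![1, ((a:ℕ):ℝ); 0, (p:ℝ)])) F Z)

/-- The normalized Hecke operator `T_p` applied via the lower embedding `_•`. -/
def TpLow (k : ℤ) (p : ℕ) (F : M2C → ℂ) (Z : M2C) : ℂ :=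
  (p : ℂ) ^ ((k : ℂ) / 2 - 1) *
    (slashOp k (embLow (((p : ℝ) ^ (-(1:ℝ)/2)) • !![(p:ℝ), 0; 0, 1])) F Z +
      ∑ a : Fin p, slashOp k (embLow (((p : ℝ) ^ (-(1:ℝ)/2)) • !![1, ((a:ℕ):ℝ); 0, (p:ℝ)])) F Z)

/-- `SL₂(ℤ)` as a set of rational matrices. -/
def SL2Qint : Set M2Q := {g | g.det = 1 ∧ ∀ i j, ∃ n : ℤ, g i j = (n : ℚ)}

/-- the left coset `Γ g` in `GL₂(ℚ)` -/
def leftCosetQ (g : M2Q) : Set M2Q := {x | ∃ γ ∈ SL2Qint, x = γ * g}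

/-- the double coset `Γ g Γ` in `GL₂(ℚ)` -/
def doubleCosetQ (g : M2Q) : Set M2Q := {x | ∃ γ₁ ∈ SL2Qint, ∃ γ₂ ∈ SL2Qint, x = γ₁ * g * γ₂}

/-- `d_m = [[m,0],[0,m⁻¹]]` -/
def dmQ (m : ℕ) : M2Q := !![(m:ℚ), 0; 0, (m:ℚ)⁻¹]

/-- entrywise coercion `ℚ → ℝ` -/
def mapR (g : M2Q) : M2R := g.map (fun x => (x : ℝ))

/-- `γ 0, …, γ (r-1)` is a system of representatives for the left cosets of `Γ`
contained in the double coset `Γ d_m Γ`. -/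
def IsRepSystem (m : ℕ) (r : ℕ) (γ : Fin r → M2Q) : Prop :=
  (∀ j, γ j ∈ doubleCosetQ (dmQ m)) ∧
  (⋃ j, leftCosetQ (γ j)) = doubleCosetQ (dmQ m) ∧
  (∀ j j', j ≠ j' → Disjoint (leftCosetQ (γ j)) (leftCosetQ (γ j')))

/-- the matrices `g_m` -/
def gmMat (m : ℕ) : M4R :=
  Matrix.fromBlocks !![0,0;0,1] !![-1,0;0,0] !![1,(m:ℝ);0,0] !![0,0;-(m:ℝ),1]

/-- `J_m = [[0,1/m],[m,0]]` -/
def JmMat (m : ℕ) : M2R := !![0, 1/(m:ℝ); (m:ℝ), 0]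

/-- `Γ(m) = {g ∈ Γ : J_m g J_m ∈ Γ}` -/
def GammaM (m : ℕ) : Set M2R := {g | g ∈ SL2Zset ∧ JmMat m * g * JmMat m ∈ SL2Zset}

/-- the left coset `Γ_{2,0} x` -/
def C20 (x : M4R) : Set M4R := {y | ∃ γ ∈ Gamma20, y = γ * x}

/-- `g^# = [[d,b],[c,a]]` -/
def sharp (g : M2R) : M2R := !![g 1 1, g 0 1; g 1 0, g 0 0]

/-- half-integral symmetric matrix `[[n, r/2],[r/2, m]]` -/
def halfIntMat (n r m : ℤ) : M2R := !![(n:ℝ), (r:ℝ)/2; (r:ℝ)/2, (m:ℝ)]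

def IsHalfIntegral (M : M2R) : Prop := ∃ n r m : ℤ, M = halfIntMat n r m

/-- `Z = X + iY` -/
def mkZ (X Y : M2R) : M2C := X.map (fun x => (x:ℂ)) + Complex.I • Y.map (fun x => (x:ℂ))

/-- `j([[a,b],[c,d]], τ) = cτ + d` on the upper half plane -/
def jSL (g : M2R) (τ : ℂ) : ℂ := (g 1 0 : ℝ) * τ + ((g 1 1 : ℝ) : ℂ)

/-- the Möbius action of `GL₂⁺(ℝ)` on the upper half plane -/
def moeb (g : M2R) (τ : ℂ) : ℂ := (((g 0 0 : ℝ) : ℂ) * τ + ((g 0 1 : ℝ) : ℂ)) / (((g 1 0 : ℝ) : ℂ) * τ + ((g 1 1 : ℝ) : ℂ))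

/-- the degree 1 real analytic Eisenstein series `E_k(τ,s) = Σ_{g ∈ Γ_∞\Γ} j(g,τ)^{-k} Im(g(τ))^s` -/
def E1 (k : ℤ) (s : ℂ) (τ : ℂ) : ℂ :=
  ∑' q : Quot relInf, jSL (qout q).1 τ ^ (-k) * ((((moeb (qout q).1 τ).im : ℝ) : ℂ)) ^ s



/-! Since `F(w) = w^{-k} |w|^{-2s}` is multiplicative, each side equals `F(φ(h(Z)) j(h, Z))`.
Computing `h(Z) j(h, Z)` through the adjugate of `CZ + D`, for `g = [[a, b], [c, d]]` of
determinant one both `φ(g•(Z)) j(g•, Z)` and `φ((g^#)_•(Z)) j((g^#)_•, Z)` come out as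
`a τ + b + 2 z + c τ τ' + d τ' - c z²`. -/

lemma ofReal_mul_add_ofReal_ne_zero {w : ℂ} (hw : 0 < w.im) {c d : ℝ} (hcd : ¬(c = 0 ∧ d = 0)) :
    (c : ℂ) * w + d ≠ 0 := by
  intro h
  have hc : c = 0 := by
    have him := congrArg Complex.im h
    simp only [add_im, mul_im, ofReal_re, ofReal_im, zero_mul, add_zero, zero_im] at him
    exact (mul_eq_zero.mp him).resolve_right hw.ne'
  subst hc
  exact hcd ⟨rfl, by simpa using h⟩

lemma PhiF_mul_chiF (k : ℤ) (s : ℂ) (W : M2C) (g : M4R) (Z : M2C) :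
    PhiF k s W * chiF k s g Z
      = (phiF W * jfac g Z) ^ (-k) * ((‖phiF W * jfac g Z‖ : ℂ)) ^ (-(2 * s)) := by
  rw [PhiF, chiF, norm_mul, mul_zpow, ofReal_mul,
    mul_cpow_ofReal_nonneg (norm_nonneg _) (norm_nonneg _)]
  ring

lemma phiF_smul (c : ℂ) (W : M2C) : phiF (c • W) = c * phiF W := by
  simp only [phiF, Matrix.smul_apply, smul_eq_mul]
  ring

lemma phiF_smul4_mul_jfac {g : M4R} {Z : M2C} (hj : jfac g Z ≠ 0) :
    phiF (smul4 g Z) * jfac g Z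
      = phiF (((mapC g).toBlocks₁₁ * Z + (mapC g).toBlocks₁₂) *
          adjugate ((mapC g).toBlocks₂₁ * Z + (mapC g).toBlocks₂₂)) := by
  rw [jfac] at hj
  rw [smul4, jfac, Matrix.inv_def, Ring.inverse_eq_inv, mul_smul_comm, phiF_smul, mul_comm,
    ← mul_assoc, mul_inv_cancel₀ hj, one_mul]

section Blocks

variable (A B : M2R)

lemma mapC_emb_toBlocks₁₁ : (mapC (emb A B)).toBlocks₁₁ = !![(A 0 0 : ℂ), 0; 0, (B 0 0 : ℂ)] := by
  ext i j; fin_cases i <;> fin_cases j <;> simp [mapC, emb, toBlocks₁₁]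

lemma mapC_emb_toBlocks₁₂ : (mapC (emb A B)).toBlocks₁₂ = !![(A 0 1 : ℂ), 0; 0, (B 0 1 : ℂ)] := by
  ext i j; fin_cases i <;> fin_cases j <;> simp [mapC, emb, toBlocks₁₂]

lemma mapC_emb_toBlocks₂₁ : (mapC (emb A B)).toBlocks₂₁ = !![(A 1 0 : ℂ), 0; 0, (B 1 0 : ℂ)] := by
  ext i j; fin_cases i <;> fin_cases j <;> simp [mapC, emb, toBlocks₂₁]

lemma mapC_emb_toBlocks₂₂ : (mapC (emb A B)).toBlocks₂₂ = !![(A 1 1 : ℂ), 0; 0, (B 1 1 : ℂ)] := by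
  ext i j; fin_cases i <;> fin_cases j <;> simp [mapC, emb, toBlocks₂₂]

end Blocks

lemma jfac_embUp (g : M2R) (Z : M2C) : jfac (embUp g) Z = (g 1 0 : ℂ) * Z 0 0 + (g 1 1 : ℂ) := by
  simp [jfac, embUp, mapC_emb_toBlocks₂₁, mapC_emb_toBlocks₂₂, det_fin_two, mul_apply,
    Fin.sum_univ_two, -cons_mul]

lemma jfac_embLow (g : M2R) (Z : M2C) : jfac (embLow g) Z = (g 1 0 : ℂ) * Z 1 1 + (g 1 1 : ℂ) := by
  simp [jfac, embLow, mapC_emb_toBlocks₂₁, mapC_emb_toBlocks₂₂, det_fin_two, mul_apply,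
    Fin.sum_univ_two, -cons_mul]

lemma phiF_smul4_embUp_mul_jfac {g : M2R} {Z : M2C} (hj : jfac (embUp g) Z ≠ 0) :
    phiF (smul4 (embUp g) Z) * jfac (embUp g) Z
      = g 0 0 * Z 0 0 + g 0 1 + 2 * Z 0 1 * g.det + Z 1 1 * (g 1 0 * Z 0 0 + g 1 1)
          - g 1 0 * Z 0 1 * Z 1 0 := by
  rw [phiF_smul4_mul_jfac hj, embUp, mapC_emb_toBlocks₁₁, mapC_emb_toBlocks₁₂,
    mapC_emb_toBlocks₂₁, mapC_emb_toBlocks₂₂, adjugate_fin_two, det_fin_two]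
  simp only [phiF, Matrix.add_apply, mul_apply, Fin.sum_univ_two, of_apply, cons_val',
    cons_val_zero, cons_val_one, cons_val_fin_one, one_apply_eq, one_apply_ne, ne_eq,
    zero_ne_one, one_ne_zero, not_false_eq_true, ofReal_zero, ofReal_one, ofReal_sub, ofReal_mul]
  ring

lemma phiF_smul4_embLow_mul_jfac {g : M2R} {Z : M2C} (hj : jfac (embLow g) Z ≠ 0) :
    phiF (smul4 (embLow g) Z) * jfac (embLow g) Z
      = Z 0 0 * (g 1 0 * Z 1 1 + g 1 1) - g 1 0 * Z 0 1 * Z 1 0 + 2 * Z 0 1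
          + g 0 0 * Z 1 1 + g 0 1 := by
  rw [phiF_smul4_mul_jfac hj, embLow, mapC_emb_toBlocks₁₁, mapC_emb_toBlocks₁₂,
    mapC_emb_toBlocks₂₁, mapC_emb_toBlocks₂₂, adjugate_fin_two]
  simp only [phiF, Matrix.add_apply, mul_apply, Fin.sum_univ_two, of_apply, cons_val',
    cons_val_zero, cons_val_one, cons_val_fin_one, one_apply_eq, one_apply_ne, ne_eq,
    zero_ne_one, one_ne_zero, not_false_eq_true, ofReal_zero, ofReal_one]
  ring

theorem Phi_chi_symmetry_general (k : ℤ) (s : ℂ) (g : M2R) (hg : g.det = 1)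
    (Z : M2C) (hZ : Z ∈ SiegelH2) :
    PhiF k s (smul4 (embUp g) Z) * chiF k s (embUp g) Z
      = PhiF k s (smul4 (embLow (sharp g)) Z) * chiF k s (embLow (sharp g)) Z := by
  have hτ : 0 < (Z 0 0).im := hZ.2.diag_pos (i := 0)
  have hτ' : 0 < (Z 1 1).im := hZ.2.diag_pos (i := 1)
  rw [det_fin_two] at hg
  have hjUp : jfac (embUp g) Z ≠ 0 := by
    rw [jfac_embUp]
    exact ofReal_mul_add_ofReal_ne_zero hτ fun ⟨hc, hd⟩ => by simp [hc, hd] at hg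
  have hjLow : jfac (embLow (sharp g)) Z ≠ 0 := by
    rw [jfac_embLow]
    exact ofReal_mul_add_ofReal_ne_zero hτ' fun ⟨(hc : g 1 0 = 0), (ha : g 0 0 = 0)⟩ => by
      simp [hc, ha] at hg
  have key : phiF (smul4 (embUp g) Z) * jfac (embUp g) Z
      = phiF (smul4 (embLow (sharp g)) Z) * jfac (embLow (sharp g)) Z := by
    rw [phiF_smul4_embUp_mul_jfac hjUp, phiF_smul4_embLow_mul_jfac hjLow, det_fin_two, hg]
    simp only [sharp, of_apply, cons_val', cons_val_zero, cons_val_one, empty_val',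
      cons_val_fin_one]
    push_cast
    ring
  rw [PhiF_mul_chiF, PhiF_mul_chiF, key]

/-- the symmetry relation
`Φ_{k,s}(g•(Z)) χ_{k,s}(g•,Z) = Φ_{k,s}((g^#)_•(Z)) χ_{k,s}((g^#)_•,Z)`. -/
theorem Phi_chi_symmetry (k : ℤ) (hk : Even k) (s : ℂ) (g : M2R) (hg : g.det = 1)
    (Z : M2C) (hZ : Z ∈ SiegelH2) :
    PhiF k s (smul4 (embUp g) Z) * chiF k s (embUp g) Z
      = PhiF k s (smul4 (embLow (sharp g)) Z) * chiF k s (embLow (sharp g)) Z :=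
  Phi_chi_symmetry_general k s g hg Z hZ
end
end

section
/- Let k be an even integer, let F : ℍ₂ → ℂ satisfy F|_k γ = F for all γ ∈ Γ₂ = Sp₂(ℤ), and let p be a prime. Then F|T_p• = F|T_p_• (as functions on ℍ₂) if and only if for all τ, τ' ∈ ℂ with Im τ > 0, Im τ' > 0 and all z ∈ ℂ with p·(Im z)² < (Im τ)·(Im τ'): p^{k−1}·F([[pτ, pz],[pz, τ']]) + p^{−1}·Σ_{λ=0}^{p−1} F([[(τ+λ)/p, z],[z, τ']]) = p^{k−1}·F([[τ, pz],[pz, pτ']]) + p^{−1}·Σ_{μ=0}^{p−1} F([[τ, z],[z, (τ'+μ)/p]]). -/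
open Matrix Complex Filter Topology

noncomputable section

/-!
The Hecke matrices are upper triangular, and `A × B` with `A`, `B` upper triangular acts on
`Z = [[τ, ζ], [ζ', τ']]` by the Möbius maps of `A` and `B` on `τ` and `τ'` and by rescaling
`ζ`, `ζ'`.
At `Z = [[τ, √p z], [√p z, τ']]` the normalizations `p^{-1/2}` and `p^{k/2-1}` combine so that
`F|T_p•` and `F|T_p_•` become exactly the two sides of the identity, and `(τ, z, τ') ↦ Z` maps the
domain `p (Im z)² < Im τ Im τ'` onto `ℍ₂`. The lower operator is the upper one conjugated by the
swap `τ ↔ τ'`.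
-/

lemma slashOp_emb_upperTriangular (k : ℤ) (F : M2C → ℂ) {a b d a' b' d' : ℝ} (hd : d ≠ 0)
    (hd' : d' ≠ 0) (τ ζ ζ' τ' : ℂ) :
    slashOp k (emb !![a, b; 0, d] !![a', b'; 0, d']) F !![τ, ζ; ζ', τ'] =
      ((d * d' : ℝ) : ℂ) ^ (-k) *
        F !![(a * τ + b) / d, a * ζ / d'; a' * ζ' / d, (a' * τ' + b') / d'] := by
  have hblocks : mapC (emb !![a, b; 0, d] !![a', b'; 0, d']) =
      Matrix.fromBlocks !![(a : ℂ), 0; 0, (a' : ℂ)] !![(b : ℂ), 0; 0, (b' : ℂ)] 0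
        !![(d : ℂ), 0; 0, (d' : ℂ)] := by
    rw [mapC, emb, Matrix.fromBlocks_map]
    congr 1 <;> ext i j <;> fin_cases i <;> fin_cases j <;> simp
  have hinv : (!![(d : ℂ), 0; 0, (d' : ℂ)])⁻¹ = !![(d : ℂ)⁻¹, 0; 0, (d' : ℂ)⁻¹] :=
    Matrix.inv_eq_right_inv (by simp [Matrix.one_fin_two, hd, hd'])
  simp only [slashOp, jfac, smul4, hblocks, Matrix.toBlocks_fromBlocks₁₁,
    Matrix.toBlocks_fromBlocks₁₂, Matrix.toBlocks_fromBlocks₂₁, Matrix.toBlocks_fromBlocks₂₂,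
    Matrix.zero_mul, zero_add, hinv, Matrix.det_fin_two_of]
  congr 2
  · push_cast; ring
  · ext i j; fin_cases i <;> fin_cases j <;> simp [div_eq_mul_inv]

lemma submatrix_swap_fin_two {α : Type*} (a b c d : α) :
    (!![a, b; c, d] : Matrix (Fin 2) (Fin 2) α).submatrix (Equiv.swap 0 1) (Equiv.swap 0 1) =
      !![d, c; b, a] := by
  ext i j; fin_cases i <;> fin_cases j <;> rfl

lemma slashOp_embLow_upperTriangular (k : ℤ) (F : M2C → ℂ) {a b d : ℝ} (hd : d ≠ 0)
    (τ ζ ζ' τ' : ℂ) :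
    slashOp k (embLow !![a, b; 0, d]) F !![τ, ζ; ζ', τ'] =
      slashOp k (embUp !![a, b; 0, d]) (fun W ↦ F (W.submatrix (Equiv.swap 0 1) (Equiv.swap 0 1)))
        !![τ', ζ'; ζ, τ] := by
  rw [embLow, embUp, Matrix.one_fin_two, slashOp_emb_upperTriangular k F one_ne_zero hd,
    slashOp_emb_upperTriangular k _ hd one_ne_zero, submatrix_swap_fin_two]
  simp

lemma rpow_neg_half_eq_inv_sqrt {x : ℝ} (hx : 0 ≤ x) : x ^ (-(1 : ℝ) / 2) = (√x)⁻¹ := by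
  rw [neg_div, Real.rpow_neg hx, ← Real.sqrt_eq_rpow]

lemma rpow_neg_half_smul_diag {x : ℝ} (hx : 0 ≤ x) :
    x ^ (-(1 : ℝ) / 2) • !![x, 0; 0, 1] = !![√x, 0; 0, (√x)⁻¹] := by
  have hsqrt : (√x)⁻¹ * x = √x := by rw [← div_eq_inv_mul, Real.div_sqrt]
  rw [rpow_neg_half_eq_inv_sqrt hx]
  ext i j; fin_cases i <;> fin_cases j <;> simp [hsqrt]

lemma rpow_neg_half_smul_upper {x : ℝ} (hx : 0 ≤ x) (b : ℝ) :
    x ^ (-(1 : ℝ) / 2) • !![1, b; 0, x] = !![(√x)⁻¹, (√x)⁻¹ * b; 0, √x] := by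
  have hsqrt : (√x)⁻¹ * x = √x := by rw [← div_eq_inv_mul, Real.div_sqrt]
  rw [rpow_neg_half_eq_inv_sqrt hx]
  ext i j; fin_cases i <;> fin_cases j <;> simp [hsqrt]

lemma natCast_cpow_half_sub_one (k : ℤ) {p : ℕ} (hp : 0 < p) :
    (p : ℂ) ^ ((k : ℂ) / 2 - 1) = ((√(p : ℝ) : ℝ) : ℂ) ^ k / p := by
  have hp' : (p : ℂ) ≠ 0 := by exact_mod_cast hp.ne'
  rw [Complex.cpow_sub _ _ hp', Complex.cpow_one, div_eq_mul_inv (k : ℂ), mul_comm (k : ℂ),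
    Complex.cpow_mul_int, Real.sqrt_eq_rpow, Complex.ofReal_cpow (Nat.cast_nonneg p)]
  norm_num

lemma TpUp_apply (k : ℤ) {p : ℕ} (hp : 0 < p) (F : M2C → ℂ) (τ z τ' : ℂ) :
    TpUp k p F !![τ, (√(p : ℝ) : ℂ) * z; (√(p : ℝ) : ℂ) * z, τ'] =
      (p : ℂ) ^ (k - 1) * F !![(p : ℂ) * τ, (p : ℂ) * z; (p : ℂ) * z, τ']
        + (p : ℂ)⁻¹ * ∑ a : Fin p, F !![(τ + ((a : ℕ) : ℂ)) / (p : ℂ), z; z, τ'] := by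
  set s := √(p : ℝ) with hs_def
  have hs : s ≠ 0 := (Real.sqrt_pos.2 (Nat.cast_pos.2 hp)).ne'
  have hsC : (s : ℂ) ≠ 0 := by exact_mod_cast hs
  have hpC : (p : ℂ) ≠ 0 := by exact_mod_cast hp.ne'
  have hss : (s : ℂ) * s = p := by exact_mod_cast Real.mul_self_sqrt (Nat.cast_nonneg p)
  have hdiag : slashOp k (embUp !![s, 0; 0, s⁻¹]) F !![τ, (s : ℂ) * z; (s : ℂ) * z, τ'] =
      (s : ℂ) ^ k * F !![(p : ℂ) * τ, (p : ℂ) * z; (p : ℂ) * z, τ'] := by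
    rw [embUp, Matrix.one_fin_two,
      slashOp_emb_upperTriangular k F (inv_ne_zero hs) one_ne_zero, ← hss]
    congr 1
    · simp
    · congr 1; ext i j; fin_cases i <;> fin_cases j <;> simp <;> field_simp
  have hupper (a : Fin p) : slashOp k (embUp !![s⁻¹, s⁻¹ * ((a : ℕ) : ℝ); 0, s]) F
      !![τ, (s : ℂ) * z; (s : ℂ) * z, τ'] =
        (s : ℂ) ^ (-k) * F !![(τ + ((a : ℕ) : ℂ)) / (p : ℂ), z; z, τ'] := by
    rw [embUp, Matrix.one_fin_two, slashOp_emb_upperTriangular k F hs one_ne_zero, ← hss]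
    congr 1
    · simp
    · congr 1; ext i j; fin_cases i <;> fin_cases j <;> simp <;> field_simp
  simp only [TpUp, rpow_neg_half_smul_diag (Nat.cast_nonneg p),
    rpow_neg_half_smul_upper (Nat.cast_nonneg p), ← hs_def, hdiag, hupper, ← Finset.mul_sum,
    natCast_cpow_half_sub_one k hp]
  rw [mul_add, ← mul_assoc, ← mul_assoc, _root_.zpow_neg, zpow_sub_one₀ hpC, ← hss, mul_zpow]
  field_simp

lemma TpLow_eq_TpUp_swap (k : ℤ) {p : ℕ} (hp : 0 < p) (F : M2C → ℂ) (τ ζ ζ' τ' : ℂ) :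
    TpLow k p F !![τ, ζ; ζ', τ'] =
      TpUp k p (fun W ↦ F (W.submatrix (Equiv.swap 0 1) (Equiv.swap 0 1))) !![τ', ζ'; ζ, τ] := by
  have hs : √(p : ℝ) ≠ 0 := (Real.sqrt_pos.2 (Nat.cast_pos.2 hp)).ne'
  simp only [TpLow, TpUp, rpow_neg_half_smul_diag (Nat.cast_nonneg p),
    rpow_neg_half_smul_upper (Nat.cast_nonneg p), slashOp_embLow_upperTriangular k F hs,
    slashOp_embLow_upperTriangular k F (inv_ne_zero hs)]

lemma TpLow_apply (k : ℤ) {p : ℕ} (hp : 0 < p) (F : M2C → ℂ) (τ z τ' : ℂ) :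
    TpLow k p F !![τ, (√(p : ℝ) : ℂ) * z; (√(p : ℝ) : ℂ) * z, τ'] =
      (p : ℂ) ^ (k - 1) * F !![τ, (p : ℂ) * z; (p : ℂ) * z, (p : ℂ) * τ']
        + (p : ℂ)⁻¹ * ∑ a : Fin p, F !![τ, z; z, (τ' + ((a : ℕ) : ℂ)) / (p : ℂ)] := by
  simp only [TpLow_eq_TpUp_swap k hp, TpUp_apply k hp, submatrix_swap_fin_two]

lemma posDef_fin_two_iff (a b c : ℝ) :
    (!![a, b; b, c] : M2R).PosDef ↔ 0 < a ∧ 0 < c ∧ b ^ 2 < a * c := by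
  have hquad (x : Fin 2 → ℝ) :
      star x ⬝ᵥ (!![a, b; b, c] *ᵥ x) = a * x 0 ^ 2 + 2 * b * x 0 * x 1 + c * x 1 ^ 2 := by
    simp only [dotProduct, Pi.star_apply, star_trivial, mulVec, of_apply, cons_val',
      cons_val_fin_one, Fin.sum_univ_two, cons_val_zero, cons_val_one]
    ring
  rw [Matrix.posDef_iff_dotProduct_mulVec]
  constructor
  · rintro ⟨-, hpos⟩
    replace hpos (x : Fin 2 → ℝ) (hx : x ≠ 0) := hquad x ▸ hpos hx
    have ha : 0 < a := by simpa using hpos ![1, 0] (by simp)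
    have hc : 0 < c := by simpa using hpos ![0, 1] (by simp)
    have hdet := hpos ![b, -a] (by simp [ha.ne'])
    simp only [cons_val_zero, cons_val_one, cons_val_fin_one, mul_neg, even_two, Even.neg_pow]
      at hdet
    exact ⟨ha, hc, by nlinarith⟩
  · rintro ⟨ha, hc, hb⟩
    refine ⟨?_, fun x hx ↦ ?_⟩
    · ext i j; fin_cases i <;> fin_cases j <;> rfl
    · have hsq : a * (a * x 0 ^ 2 + 2 * b * x 0 * x 1 + c * x 1 ^ 2) =
          (a * x 0 + b * x 1) ^ 2 + (a * c - b ^ 2) * x 1 ^ 2 := by ring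
      rw [hquad]
      refine pos_of_mul_pos_right (hsq ▸ ?_) ha.le
      rcases eq_or_ne (x 1) 0 with h1 | h1
      · have h0 : x 0 ≠ 0 := fun h0 ↦ hx (funext fun i ↦ by fin_cases i <;> simp [h0, h1])
        simpa [h1] using sq_pos_of_ne_zero (mul_ne_zero ha.ne' h0)
      · exact add_pos_of_nonneg_of_pos (sq_nonneg _)
          (mul_pos (sub_pos.2 hb) (sq_pos_of_ne_zero h1))

lemma mem_SiegelH2_iff (τ w τ' : ℂ) :
    !![τ, w; w, τ'] ∈ SiegelH2 ↔ 0 < τ.im ∧ 0 < τ'.im ∧ w.im ^ 2 < τ.im * τ'.im := by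
  have hIm : ImM !![τ, w; w, τ'] = !![τ.im, w.im; w.im, τ'.im] := by
    ext i j; fin_cases i <;> fin_cases j <;> rfl
  have hsymm : (!![τ, w; w, τ'] : M2C).IsSymm := by
    ext i j; fin_cases i <;> fin_cases j <;> rfl
  rw [SiegelH2, Set.mem_ofPred_eq, hIm, posDef_fin_two_iff, and_iff_right hsymm]

lemma sqrt_mul_mem_SiegelH2_iff {x : ℝ} (hx : 0 ≤ x) (τ z τ' : ℂ) :
    !![τ, (√x : ℂ) * z; (√x : ℂ) * z, τ'] ∈ SiegelH2 ↔
      0 < τ.im ∧ 0 < τ'.im ∧ x * z.im ^ 2 < τ.im * τ'.im := by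
  rw [mem_SiegelH2_iff, Complex.im_ofReal_mul, mul_pow, Real.sq_sqrt hx]

theorem strong_symmetry_criterion_general (k : ℤ) (F : M2C → ℂ) (p : ℕ) (hp : p.Prime) :
    (∀ Z ∈ SiegelH2, TpUp k p F Z = TpLow k p F Z) ↔
    (∀ tau z tau' : ℂ, 0 < tau.im → 0 < tau'.im → (p : ℝ) * z.im ^ 2 < tau.im * tau'.im →
      (p : ℂ) ^ (k - 1) * F !![(p:ℂ) * tau, (p:ℂ) * z; (p:ℂ) * z, tau']
        + (p : ℂ)⁻¹ * ∑ lam : Fin p, F !![(tau + ((lam:ℕ):ℂ)) / (p:ℂ), z; z, tau']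
      = (p : ℂ) ^ (k - 1) * F !![tau, (p:ℂ) * z; (p:ℂ) * z, (p:ℂ) * tau']
        + (p : ℂ)⁻¹ * ∑ mu : Fin p, F !![tau, z; z, (tau' + ((mu:ℕ):ℂ)) / (p:ℂ)]) := by
  have hp0 := hp.pos
  constructor
  · intro H τ z τ' hτ hτ' hz
    have := H _ ((sqrt_mul_mem_SiegelH2_iff (Nat.cast_nonneg p) τ z τ').2 ⟨hτ, hτ', hz⟩)
    rwa [TpUp_apply k hp0, TpLow_apply k hp0] at this
  · intro H Z hZ
    have hs : (√(p : ℝ) : ℂ) ≠ 0 := by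
      exact_mod_cast (Real.sqrt_pos.2 (Nat.cast_pos.2 hp0)).ne'
    obtain ⟨τ, z, τ', rfl⟩ : ∃ τ z τ', Z = !![τ, (√(p : ℝ) : ℂ) * z; (√(p : ℝ) : ℂ) * z, τ'] :=
      ⟨Z 0 0, Z 0 1 / √(p : ℝ), Z 1 1, by
        rw [mul_div_cancel₀ _ hs]; exact Z.eta_fin_two.trans (by rw [hZ.1.apply 0 1])⟩
    obtain ⟨hτ, hτ', hz⟩ := (sqrt_mul_mem_SiegelH2_iff (Nat.cast_nonneg p) τ z τ').1 hZ
    rw [TpUp_apply k hp0, TpLow_apply k hp0]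
    exact H τ z τ' hτ hτ' hz

/-- for a `Γ₂`-modular function `F` of weight `k`, the strong symmetry
`F|T_p• = F|T_p_•` is equivalent to the explicit identity. -/
theorem strong_symmetry_criterion (k : ℤ) (hk : Even k) (F : M2C → ℂ)
    (hF : ∀ γ ∈ Sp2Z, ∀ Z ∈ SiegelH2, slashOp k γ F Z = F Z) (p : ℕ) (hp : p.Prime) :
    (∀ Z ∈ SiegelH2, TpUp k p F Z = TpLow k p F Z) ↔
    (∀ tau z tau' : ℂ, 0 < tau.im → 0 < tau'.im → (p : ℝ) * z.im ^ 2 < tau.im * tau'.im →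
      (p : ℂ) ^ (k - 1) * F !![(p:ℂ) * tau, (p:ℂ) * z; (p:ℂ) * z, tau']
        + (p : ℂ)⁻¹ * ∑ lam : Fin p, F !![(tau + ((lam:ℕ):ℂ)) / (p:ℂ), z; z, tau']
      = (p : ℂ) ^ (k - 1) * F !![tau, (p:ℂ) * z; (p:ℂ) * z, (p:ℂ) * tau']
        + (p : ℂ)⁻¹ * ∑ mu : Fin p, F !![tau, z; z, (tau' + ((mu:ℕ):ℂ)) / (p:ℂ)]) :=
  strong_symmetry_criterion_general k F p hp
end
end
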